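/- Assume either z_i z_j < 0 for some i, j, or z_j q_0 < 0 for all j, and let φ* be the unique zero of f. Fix φ_0 ∈ ℝ and, for each L > 0, let φ_L be the unique twice continuously differentiable solution of φ″ + f(φ) = 0 on [−L/2, L/2] with φ_L(−L/2) = φ_L(L/2) = φ_0, and set σ(L) = |φ_L′(−L/2)|. Then σ(L) = max { |φ_L′(x)| : x ∈ [−L/2, L/2] }; if φ_0 ≠ φ* then L ↦ σ(L) is strictly increasing; and in all cases σ(L) → √(2 (F(φ*) − F(φ_0))) as L → ∞ (saturation of the surface charge density). -/

import Mathlib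

/-!
Along a solution the energy `u² / 2 + F φ` is conserved, and `F` is strictly concave with its
maximum at `φ*`. Hence `F ∘ φ_L` is smallest at the endpoints, which gives `|φ_L'| ≤ σ(L)`.
For `φ0 < φ*` the solution rises to a turning value `r < φ*` with `F r = σ(L)² / 2 + F φ0`; it
cannot reach the equilibrium `(φ*, 0)` by uniqueness for the planar system. Its length is then a
time map `L = T(r)` which, after an integration by parts, is visibly monotone in `r`. So `r`
increases with `L` and tends to `φ*`, and `σ(L) = √(2 (F r - F φ0))` follows. The case
`φ0 > φ*` reduces to this one by the reflection `φ ↦ 2 φ* - φ`.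
-/

open Real Filter Set Topology

/-- A (C²) solution of the PB equation `φ'' + f(φ) = 0` on `[a, b]`, written as the
first-order planar system `φ' = u`, `u' = -f(φ)`. -/
def IsPBSol (f : ℝ → ℝ) (a b : ℝ) (φ u : ℝ → ℝ) : Prop :=
  ∀ x ∈ Set.Icc a b,
    HasDerivWithinAt φ (u x) (Set.Icc a b) x ∧
    HasDerivWithinAt u (-(f (φ x))) (Set.Icc a b) x

lemma eq_of_hasDerivWithinAt_zero {g : ℝ → ℝ} {p q : ℝ}
    (hg : ∀ x ∈ Icc p q, HasDerivWithinAt g 0 (Icc p q) x) : ∀ x ∈ Icc p q, g x = g p :=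
  constant_of_has_deriv_right_zero (fun x hx => (hg x hx).continuousWithinAt) fun x hx =>
    (hg x (Ico_subset_Icc_self hx)).mono_of_mem_nhdsWithin (Icc_mem_nhdsGE_of_mem hx)

lemma MonotoneOn.strictMonoOn_of_rightInvOn {α β : Type*} [LinearOrder α] [Preorder β]
    {T : α → β} {r : β → α} {s : Set α} {t : Set β} (hT : MonotoneOn T s) (hr : MapsTo r t s)
    (hinv : RightInvOn r T t) : StrictMonoOn r t := by
  intro L₁ h₁ L₂ h₂ hlt
  by_contra! hle
  have := hT (hr h₂) (hr h₁) hle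
  rw [hinv h₁, hinv h₂] at this
  exact hlt.not_ge this

lemma MonotoneOn.tendsto_of_eventually_rightInv {T r : ℝ → ℝ} {p q : ℝ}
    (hT : MonotoneOn T (Ico p q)) (hr : ∀ᶠ L in atTop, r L ∈ Ico p q ∧ T (r L) = L) :
    Tendsto r atTop (𝓝 q) := by
  refine tendsto_order.2 ⟨fun c hc => ?_, fun c hc => hr.mono fun L hL => hL.1.2.trans hc⟩
  rcases lt_or_ge c p with hcp | hpc
  · exact hr.mono fun L hL => hcp.trans_le hL.1.1
  filter_upwards [hr, eventually_gt_atTop (T c)] with L hL hLc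
  by_contra! hle
  have := hT hL.1 ⟨hpc, hc⟩ hle
  rw [hL.2] at this
  exact this.not_gt hLc

section Potential

variable {f F : ℝ → ℝ} {φs y : ℝ}

lemma potential_strictMonoOn_Iic (hF : ∀ y, HasDerivAt F (f y) y) (hf : StrictAnti f)
    (hs : f φs = 0) : StrictMonoOn F (Iic φs) := by
  refine strictMonoOn_of_deriv_pos (convex_Iic φs)
    (fun y _ => (hF y).continuousAt.continuousWithinAt) fun y hy => ?_
  rw [interior_Iic] at hy
  exact (hF y).deriv ▸ hs ▸ hf hy

lemma potential_strictAntiOn_Ici (hF : ∀ y, HasDerivAt F (f y) y) (hf : StrictAnti f)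
    (hs : f φs = 0) : StrictAntiOn F (Ici φs) := by
  refine strictAntiOn_of_deriv_neg (convex_Ici φs)
    (fun y _ => (hF y).continuousAt.continuousWithinAt) fun y hy => ?_
  rw [interior_Ici] at hy
  exact (hF y).deriv ▸ hs ▸ hf hy

lemma potential_lt_of_ne (hF : ∀ y, HasDerivAt F (f y) y) (hf : StrictAnti f)
    (hs : f φs = 0) (hy : y ≠ φs) : F y < F φs := by
  rcases hy.lt_or_gt with h | h
  · exact potential_strictMonoOn_Iic hF hf hs h.le self_mem_Iic h
  · exact potential_strictAntiOn_Ici hF hf hs self_mem_Ici h.le h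

lemma potential_le (hF : ∀ y, HasDerivAt F (f y) y) (hf : StrictAnti f) (hs : f φs = 0)
    (y : ℝ) : F y ≤ F φs := by
  rcases eq_or_ne y φs with rfl | hy
  · exact le_rfl
  · exact (potential_lt_of_ne hF hf hs hy).le

end Potential

/-- Under these hypotheses `(φs, 0)` is the only equilibrium of `φ' = u`, `u' = -f φ`, and it is
a saddle. -/
structure IsSaddleNonlinearity (f F f' : ℝ → ℝ) (φs : ℝ) : Prop where
  hasDerivAt_potential : ∀ y, HasDerivAt F (f y) y
  hasDerivAt : ∀ y, HasDerivAt f (f' y) y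
  deriv_neg : ∀ y, f' y < 0
  continuous_deriv : Continuous f'
  apply_root : f φs = 0

namespace IsSaddleNonlinearity

variable {f F f' : ℝ → ℝ} {φs : ℝ}

lemma strictAnti (hS : IsSaddleNonlinearity f F f' φs) : StrictAnti f :=
  strictAnti_of_deriv_neg fun y => (hS.hasDerivAt y).deriv ▸ hS.deriv_neg y

lemma continuous (hS : IsSaddleNonlinearity f F f' φs) : Continuous f :=
  continuous_iff_continuousAt.2 fun y => (hS.hasDerivAt y).continuousAt

lemma continuous_potential (hS : IsSaddleNonlinearity f F f' φs) : Continuous F :=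
  continuous_iff_continuousAt.2 fun y => (hS.hasDerivAt_potential y).continuousAt

lemma locallyLipschitz (hS : IsSaddleNonlinearity f F f' φs) : LocallyLipschitz f := by
  have hderiv : deriv f = f' := funext fun y => (hS.hasDerivAt y).deriv
  exact ContDiff.locallyLipschitz (𝕂 := ℝ) (contDiff_one_iff_deriv.2
    ⟨fun y => (hS.hasDerivAt y).differentiableAt, hderiv ▸ hS.continuous_deriv⟩)

lemma pos_of_lt (hS : IsSaddleNonlinearity f F f' φs) {y : ℝ} (hy : y < φs) : 0 < f y :=
  hS.apply_root ▸ hS.strictAnti hy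

lemma reflect (hS : IsSaddleNonlinearity f F f' φs) :
    IsSaddleNonlinearity (fun y => -f (2 * φs - y)) (fun y => F (2 * φs - y))
      (fun y => f' (2 * φs - y)) φs where
  hasDerivAt_potential y :=
    (hS.hasDerivAt_potential (2 * φs - y)).comp_const_sub (2 * φs) y
  hasDerivAt y := by
    simpa using ((hS.hasDerivAt (2 * φs - y)).comp_const_sub (2 * φs) y).fun_neg
  deriv_neg y := hS.deriv_neg _
  continuous_deriv := hS.continuous_deriv.comp (continuous_const.sub continuous_id)
  apply_root := by simp [two_mul, hS.apply_root]

end IsSaddleNonlinearity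

namespace IsPBSol

variable {f F f' : ℝ → ℝ} {a b φs : ℝ} {φ u : ℝ → ℝ}

lemma mono (h : IsPBSol f a b φ u) {p q : ℝ} (hp : a ≤ p) (hq : q ≤ b) :
    IsPBSol f p q φ u := fun x hx =>
  have hx' : x ∈ Icc a b := ⟨hp.trans hx.1, hx.2.trans hq⟩
  ⟨(h x hx').1.mono (Icc_subset_Icc hp hq), (h x hx').2.mono (Icc_subset_Icc hp hq)⟩

lemma continuousOn_potential (h : IsPBSol f a b φ u) : ContinuousOn φ (Icc a b) :=
  fun x hx => (h x hx).1.continuousWithinAt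

lemma continuousOn_field (h : IsPBSol f a b φ u) : ContinuousOn u (Icc a b) :=
  fun x hx => (h x hx).2.continuousWithinAt

lemma hasDerivAt_potential (h : IsPBSol f a b φ u) {x : ℝ} (hx : x ∈ Ioo a b) :
    HasDerivAt φ (u x) x :=
  (h x (Ioo_subset_Icc_self hx)).1.hasDerivAt (Icc_mem_nhds hx.1 hx.2)

lemma hasDerivAt_field (h : IsPBSol f a b φ u) {x : ℝ} (hx : x ∈ Ioo a b) :
    HasDerivAt u (-f (φ x)) x :=
  (h x (Ioo_subset_Icc_self hx)).2.hasDerivAt (Icc_mem_nhds hx.1 hx.2)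

lemma reflect (h : IsPBSol f a b φ u) (c : ℝ) :
    IsPBSol (fun y => -f (2 * c - y)) a b (fun x => 2 * c - φ x) (fun x => -u x) :=
  fun x hx => ⟨(h x hx).1.const_sub _, by simpa using (h x hx).2.fun_neg⟩

lemma energy_eq (hF : ∀ y, HasDerivAt F (f y) y) (h : IsPBSol f a b φ u) :
    ∀ x ∈ Icc a b, u x ^ 2 / 2 + F (φ x) = u a ^ 2 / 2 + F (φ a) := by
  refine eq_of_hasDerivWithinAt_zero fun x hx => ?_
  have hd := (((h x hx).2.pow 2).div_const 2).add ((hF (φ x)).comp_hasDerivWithinAt x (h x hx).1)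
  exact hd.congr_deriv (by push_cast; ring)

lemma exists_field_eq_zero (h : IsPBSol f a b φ u) (hab : a < b) (hφ : φ b = φ a) :
    ∃ x ∈ Ioo a b, u x = 0 :=
  exists_hasDerivAt_eq_zero hab h.continuousOn_potential hφ.symm fun _ hx =>
    h.hasDerivAt_potential hx

lemma energy_le (hF : ∀ y, HasDerivAt F (f y) y) (hf : StrictAnti f) (hs : f φs = 0)
    (h : IsPBSol f a b φ u) (hab : a < b) (hφ : φ b = φ a) :
    u a ^ 2 / 2 + F (φ a) ≤ F φs := by
  obtain ⟨x, hx, hux⟩ := h.exists_field_eq_zero hab hφ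
  have hE := h.energy_eq hF x (Ioo_subset_Icc_self hx)
  rw [hux] at hE
  linarith [potential_le hF hf hs (φ x)]

/-- At an interior minimum of `F ∘ φ` either `φ = φs`, the maximum of `F`, or `u = 0`, where
`F ∘ φ` equals the energy. -/
lemma potential_left_le (hF : ∀ y, HasDerivAt F (f y) y) (hf : StrictAnti f) (hs : f φs = 0)
    (h : IsPBSol f a b φ u) (hφ : φ b = φ a) : ∀ x ∈ Icc a b, F (φ a) ≤ F (φ x) := by
  intro x hx
  have hFc : Continuous F := continuous_iff_continuousAt.2 fun y => (hF y).continuousAt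
  obtain ⟨x0, hx0, hmin⟩ := isCompact_Icc.exists_isMinOn (nonempty_Icc.2 (hx.1.trans hx.2))
    (hFc.comp_continuousOn h.continuousOn_potential)
  refine le_trans (?_ : F (φ a) ≤ F (φ x0)) (hmin hx)
  rcases hx0.1.eq_or_lt with rfl | ha
  · exact le_rfl
  rcases hx0.2.eq_or_lt with rfl | hb
  · rw [hφ]
  have hcrit : f (φ x0) * u x0 = 0 := (hmin.isLocalMin (Icc_mem_nhds ha hb)).hasDerivAt_eq_zero
    ((hF (φ x0)).comp x0 (h.hasDerivAt_potential ⟨ha, hb⟩))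
  rcases mul_eq_zero.1 hcrit with hf0 | hu0
  · rw [hf.injective (hf0.trans hs.symm)]
    exact potential_le hF hf hs _
  · have hE := h.energy_eq hF x0 hx0
    rw [hu0] at hE
    nlinarith [sq_nonneg (u a)]

lemma abs_field_le (hF : ∀ y, HasDerivAt F (f y) y) (hf : StrictAnti f) (hs : f φs = 0)
    (h : IsPBSol f a b φ u) (hφ : φ b = φ a) : ∀ x ∈ Icc a b, |u x| ≤ |u a| := fun x hx =>
  sq_le_sq.1 (by nlinarith [h.energy_eq hF x hx, h.potential_left_le hF hf hs hφ x hx])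

/-- Grönwall applied to `(φ - φs, u)`: its derivative `(u, -f φ)` has norm at most `1 + K` times
its own, `K` a Lipschitz constant of `f` on the range of `φ`. -/
lemma potential_eq_of_equilibrium (hf : LocallyLipschitz f) (hs : f φs = 0)
    (h : IsPBSol f a b φ u) {x0 : ℝ} (hx0 : x0 ∈ Icc a b) (hφ0 : φ x0 = φs) (hu0 : u x0 = 0) :
    ∀ x ∈ Icc x0 b, φ x = φs := by
  obtain ⟨K, hK⟩ := hf.locallyLipschitzOn.exists_lipschitzOnWith_of_compact
    (isCompact_Icc.image_of_continuousOn h.continuousOn_potential)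
  have hsub : Icc x0 b ⊆ Icc a b := Icc_subset_Icc hx0.1 le_rfl
  have hzero := eq_zero_of_abs_deriv_le_mul_abs_self_of_eq_zero_right
    (f := fun x => (φ x - φs, u x)) (f' := fun x => (u x, -f (φ x))) (K := 1 + K)
    (((h.continuousOn_potential.sub continuousOn_const).prodMk h.continuousOn_field).mono hsub)
    (fun x hx => ((((h x (hsub (Ico_subset_Icc_self hx))).1.sub_const φs).prodMk
      (h x (hsub (Ico_subset_Icc_self hx))).2).mono_of_mem_nhdsWithin
        (Icc_mem_nhdsGE_of_mem ⟨hx0.1.trans hx.1, hx.2⟩)))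
    (by simp [hφ0, hu0])
    (fun x hx => by
      have hLip : |f (φ x)| ≤ K * |φ x - φs| := by
        simpa [Real.dist_eq, hs, hφ0] using hK.dist_le_mul (φ x)
          (mem_image_of_mem φ (hsub (Ico_subset_Icc_self hx))) (φ x0) (mem_image_of_mem φ hx0)
      have hK0 : (0 : ℝ) ≤ K := K.2
      have h1 := le_max_left |φ x - φs| |u x|
      have h2 := le_max_right |φ x - φs| |u x|
      simp only [Prod.norm_mk, Real.norm_eq_abs, abs_neg]
      exact max_le (by nlinarith [abs_nonneg (φ x - φs)]) (by nlinarith [abs_nonneg (u x)]))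
  exact fun x hx => sub_eq_zero.1 (Prod.ext_iff.1 (hzero x hx)).1

lemma le_of_energy_le (hF : ∀ y, HasDerivAt F (f y) y) (hf : StrictAnti f) (hs : f φs = 0)
    (h : IsPBSol f a b φ u) {r : ℝ} (hr : r < φs) (har : φ a ≤ r)
    (hE : u a ^ 2 / 2 + F (φ a) ≤ F r) : ∀ x ∈ Icc a b, φ x ≤ r := by
  intro x hx
  by_contra! hxr
  obtain ⟨y, hy, hφy⟩ := intermediate_value_Icc hx.1
    (h.continuousOn_potential.mono (Icc_subset_Icc le_rfl hx.2))
    (⟨har.trans (le_min hxr.le hr.le), min_le_left _ _⟩ : min (φ x) φs ∈ Icc (φ a) (φ x))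
  have hFy : F r < F (φ y) := hφy ▸
    potential_strictMonoOn_Iic hF hf hs hr.le (min_le_right (φ x) φs) (lt_min hxr hr)
  nlinarith [h.energy_eq hF y ⟨hy.1, hy.2.trans hx.2⟩, sq_nonneg (u y)]

lemma energy_lt (hS : IsSaddleNonlinearity f F f' φs) (h : IsPBSol f a b φ u) (hab : a < b)
    (hφ : φ b = φ a) (h0 : φ a ≠ φs) : u a ^ 2 / 2 + F (φ a) < F φs := by
  refine (h.energy_le hS.hasDerivAt_potential hS.strictAnti hS.apply_root hab hφ).lt_of_ne
    fun hE => h0 ?_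
  obtain ⟨x, hx, hux⟩ := h.exists_field_eq_zero hab hφ
  have hFx := h.energy_eq hS.hasDerivAt_potential x (Ioo_subset_Icc_self hx)
  rw [hux, hE] at hFx
  have hφx : φ x = φs := by
    by_contra hne
    have := potential_lt_of_ne hS.hasDerivAt_potential hS.strictAnti hS.apply_root hne
    linarith
  rw [← hφ]
  exact h.potential_eq_of_equilibrium hS.locallyLipschitz hS.apply_root
    (Ioo_subset_Icc_self hx) hφx hux b ⟨hx.2.le, le_rfl⟩

end IsPBSol

noncomputable def timeMapKernel (f F f' : ℝ → ℝ) (r y : ℝ) : ℝ :=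
  √(2 * (F r - F y)) * f' y / f y ^ 2

/-- The length of the interval on which the solution with `φ = φ0` at both ends turns at `r`.
It is `2 ∫_{φ0}^r dφ / √(2 (F r - F φ))` after an integration by parts against `f`, which removes
the singularity at the turning point. -/
noncomputable def timeMap (f F f' : ℝ → ℝ) (φ0 r : ℝ) : ℝ :=
  2 * √(2 * (F r - F φ0)) / f φ0 - 2 * ∫ y in φ0..r, timeMapKernel f F f' r y

lemma timeMapKernel_nonpos {f F f' : ℝ → ℝ} (hf' : ∀ y, f' y ≤ 0) (r y : ℝ) :
    timeMapKernel f F f' r y ≤ 0 :=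
  div_nonpos_of_nonpos_of_nonneg (mul_nonpos_of_nonneg_of_nonpos (sqrt_nonneg _) (hf' y))
    (sq_nonneg _)

lemma timeMapKernel_anti {f F f' : ℝ → ℝ} (hf' : ∀ y, f' y ≤ 0) {r₁ r₂ : ℝ}
    (h : F r₁ ≤ F r₂) (y : ℝ) : timeMapKernel f F f' r₂ y ≤ timeMapKernel f F f' r₁ y :=
  div_le_div_of_nonneg_right (mul_le_mul_of_nonpos_right (sqrt_le_sqrt (by linarith)) (hf' y))
    (sq_nonneg _)

namespace IsSaddleNonlinearity

variable {f F f' : ℝ → ℝ} {φs : ℝ}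

lemma continuousOn_timeMapKernel (hS : IsSaddleNonlinearity f F f' φs) (r : ℝ) :
    ContinuousOn (timeMapKernel f F f' r) (Iio φs) :=
  ((continuous_sqrt.comp (continuous_const.mul
    (continuous_const.sub hS.continuous_potential))).mul hS.continuous_deriv).continuousOn.div
    (hS.continuous.pow 2).continuousOn fun _ hy => (pow_pos (hS.pos_of_lt hy) 2).ne'

lemma intervalIntegrable_timeMapKernel (hS : IsSaddleNonlinearity f F f' φs) (r : ℝ)
    {p q : ℝ} (hp : p < φs) (hq : q < φs) :
    IntervalIntegrable (timeMapKernel f F f' r) MeasureTheory.volume p q :=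
  ((hS.continuousOn_timeMapKernel r).mono fun _ hy =>
    hy.2.trans_lt (max_lt hp hq)).intervalIntegrable

lemma hasDerivAt_integral_timeMapKernel (hS : IsSaddleNonlinearity f F f' φs) (r : ℝ)
    {c y : ℝ} (hc : c < φs) (hy : y < φs) :
    HasDerivAt (fun y => ∫ t in c..y, timeMapKernel f F f' r t) (timeMapKernel f F f' r y) y :=
  intervalIntegral.integral_hasDerivAt_right (hS.intervalIntegrable_timeMapKernel r hc hy)
    ((hS.continuousOn_timeMapKernel r).stronglyMeasurableAtFilter isOpen_Iio y hy)
    ((hS.continuousOn_timeMapKernel r).continuousAt (Iio_mem_nhds hy))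

lemma monotoneOn_timeMap (hS : IsSaddleNonlinearity f F f' φs) (φ0 : ℝ) :
    MonotoneOn (timeMap f F f' φ0) (Ico φ0 φs) := by
  intro r₁ hr₁ r₂ hr₂ h12
  have h0 : φ0 < φs := hr₁.1.trans_lt hr₁.2
  have hFr : F r₁ ≤ F r₂ := (potential_strictMonoOn_Iic hS.hasDerivAt_potential hS.strictAnti
    hS.apply_root).monotoneOn hr₁.2.le hr₂.2.le h12
  have hsplit := intervalIntegral.integral_add_adjacent_intervals
    (hS.intervalIntegrable_timeMapKernel r₂ h0 hr₁.2)
    (hS.intervalIntegrable_timeMapKernel r₂ hr₁.2 hr₂.2)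
  have htail : ∫ y in r₁..r₂, timeMapKernel f F f' r₂ y ≤ 0 := by
    simpa using intervalIntegral.integral_mono_on h12
      (hS.intervalIntegrable_timeMapKernel r₂ hr₁.2 hr₂.2) intervalIntegrable_const
      fun y _ => timeMapKernel_nonpos (fun y => (hS.deriv_neg y).le) r₂ y
  have hhead :
      ∫ y in φ0..r₁, timeMapKernel f F f' r₂ y ≤ ∫ y in φ0..r₁, timeMapKernel f F f' r₁ y :=
    intervalIntegral.integral_mono_on hr₁.1 (hS.intervalIntegrable_timeMapKernel r₂ h0 hr₁.2)
      (hS.intervalIntegrable_timeMapKernel r₁ h0 hr₁.2) fun y _ =>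
        timeMapKernel_anti (fun y => (hS.deriv_neg y).le) hFr y
  have hboundary : 2 * √(2 * (F r₁ - F φ0)) / f φ0 ≤ 2 * √(2 * (F r₂ - F φ0)) / f φ0 :=
    div_le_div_of_nonneg_right (by gcongr) (hS.pos_of_lt h0).le
  simp only [timeMap]
  linarith

end IsSaddleNonlinearity

namespace IsPBSol

variable {f F f' : ℝ → ℝ} {a b φs : ℝ} {φ u : ℝ → ℝ}

/-- On a branch where `u` has constant sign `ε`, the derivative of this quantity is
`-1 - f' u² / f² + 1 + ε |u| u f' / f² = 0`, because `√(2 (F r - F φ)) = |u|` at energy `F r`. -/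
lemma timeMap_invariant (hS : IsSaddleNonlinearity f F f' φs) (h : IsPBSol f a b φ u)
    {r c ε : ℝ} (hc : c < φs) (hφ : ∀ x ∈ Icc a b, φ x < φs)
    (hE : ∀ x ∈ Icc a b, u x ^ 2 / 2 + F (φ x) = F r) (hε : ∀ x ∈ Icc a b, ε * |u x| = u x) :
    ∀ x ∈ Icc a b, u x / f (φ x) + x + ε * ∫ y in c..φ x, timeMapKernel f F f' r y
      = u a / f (φ a) + a + ε * ∫ y in c..φ a, timeMapKernel f F f' r y := by
  refine eq_of_hasDerivWithinAt_zero fun x hx => ?_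
  have hfx : f (φ x) ≠ 0 := (hS.pos_of_lt (hφ x hx)).ne'
  have hd := (((h x hx).2.div ((hS.hasDerivAt (φ x)).comp_hasDerivWithinAt x (h x hx).1)
    hfx).add (hasDerivWithinAt_id x _)).add
    (((hS.hasDerivAt_integral_timeMapKernel r hc (hφ x hx)).comp_hasDerivWithinAt x
      (h x hx).1).const_mul ε)
  refine hd.congr_deriv ?_
  have hsqrt : √(2 * (F r - F (φ x))) = |u x| := by
    rw [← sqrt_sq_eq_abs]
    congr 1
    linarith [hE x hx]
  simp only [timeMapKernel, hsqrt, Function.comp_apply]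
  field_simp
  linear_combination (f' (φ x) * u x) * hε x hx

lemma exists_timeMap_eq (hS : IsSaddleNonlinearity f F f' φs) (h : IsPBSol f a b φ u)
    (hab : a < b) (hφ : φ b = φ a) (h0 : φ a < φs) :
    ∃ r ∈ Ico (φ a) φs, timeMap f F f' (φ a) r = b - a ∧ |u a| = √(2 * (F r - F (φ a))) := by
  have hF := hS.hasDerivAt_potential
  have hElt := h.energy_lt hS hab hφ h0.ne
  obtain ⟨r, hr, hFr⟩ := intermediate_value_Icc h0.le hS.continuous_potential.continuousOn
    (⟨by nlinarith [sq_nonneg (u a)], hElt.le⟩ : u a ^ 2 / 2 + F (φ a) ∈ Icc (F (φ a)) (F φs))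
  have hrs : r < φs := hr.2.lt_of_ne fun hr' => hElt.ne (hr' ▸ hFr).symm
  have hφs : ∀ x ∈ Icc a b, φ x < φs := fun x hx =>
    (h.le_of_energy_le hF hS.strictAnti hS.apply_root hrs hr.1 hFr.ge x hx).trans_lt hrs
  have hE : ∀ x ∈ Icc a b, u x ^ 2 / 2 + F (φ x) = F r := fun x hx =>
    (h.energy_eq hF x hx).trans hFr.symm
  have hanti : StrictAntiOn u (Icc a b) :=
    strictAntiOn_of_deriv_neg (convex_Icc a b) h.continuousOn_field fun x hx => by
      rw [interior_Icc] at hx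
      rw [(h.hasDerivAt_field hx).deriv, neg_lt_zero]
      exact hS.pos_of_lt (hφs x (Ioo_subset_Icc_self hx))
  have ha : a ∈ Icc a b := left_mem_Icc.2 hab.le
  have hb : b ∈ Icc a b := right_mem_Icc.2 hab.le
  have hub : u b = -u a := by
    have hEb := hE b hb
    rw [hφ] at hEb
    have hsq : u b ^ 2 = u a ^ 2 := by linarith [hE a ha]
    exact (sq_eq_sq_iff_eq_or_eq_neg.1 hsq).resolve_left (hanti ha hb hab).ne
  have hua : 0 < u a := by linarith [hanti ha hb hab]
  obtain ⟨m, hm, hum⟩ := intermediate_value_Icc' hab.le h.continuousOn_field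
    (⟨by linarith, hua.le⟩ : (0 : ℝ) ∈ Icc (u b) (u a))
  have hEm := hE m hm
  rw [hum] at hEm
  have hφm : φ m = r := (potential_strictMonoOn_Iic hF hS.strictAnti hS.apply_root).injOn
    (hφs m hm).le hrs.le (by linarith)
  have hleft := (h.mono le_rfl hm.2).timeMap_invariant hS (ε := 1) h0
    (fun x hx => hφs x ⟨hx.1, hx.2.trans hm.2⟩) (fun x hx => hE x ⟨hx.1, hx.2.trans hm.2⟩)
    (fun x hx => by
      rw [one_mul, abs_of_nonneg]
      exact hum ▸ hanti.antitoneOn ⟨hx.1, hx.2.trans hm.2⟩ hm hx.2)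
    m (right_mem_Icc.2 hm.1)
  have hright := (h.mono hm.1 le_rfl).timeMap_invariant hS (ε := -1) h0
    (fun x hx => hφs x ⟨hm.1.trans hx.1, hx.2⟩) (fun x hx => hE x ⟨hm.1.trans hx.1, hx.2⟩)
    (fun x hx => by
      rw [neg_one_mul, abs_of_nonpos, neg_neg]
      exact hum ▸ hanti.antitoneOn hm ⟨hm.1.trans hx.1, hx.2⟩ hx.1)
    b (right_mem_Icc.2 hm.2)
  have hsqrt : √(2 * (F r - F (φ a))) = u a := by
    rw [← sqrt_sq hua.le]
    congr 1
    linarith [hE a ha]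
  rw [hum, hφm, intervalIntegral.integral_same, zero_div] at hleft
  rw [hum, hφm, hub, hφ, intervalIntegral.integral_same, zero_div, neg_div] at hright
  refine ⟨r, ⟨hr.1, hrs⟩, ?_, by rw [hsqrt, abs_of_pos hua]⟩
  rw [timeMap, hsqrt, mul_div_assoc]
  linarith

end IsPBSol

def SolvesEqualPotentialBVP (f : ℝ → ℝ) (φ0 : ℝ) (φf uf : ℝ → ℝ → ℝ) : Prop :=
  ∀ L : ℝ, 0 < L →
    IsPBSol f (-(L / 2)) (L / 2) (φf L) (uf L) ∧ φf L (-(L / 2)) = φ0 ∧ φf L (L / 2) = φ0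

namespace SolvesEqualPotentialBVP

variable {f F f' : ℝ → ℝ} {φs φ0 : ℝ} {φf uf : ℝ → ℝ → ℝ}

lemma reflect (h : SolvesEqualPotentialBVP f φ0 φf uf) (c : ℝ) :
    SolvesEqualPotentialBVP (fun y => -f (2 * c - y)) (2 * c - φ0)
      (fun L x => 2 * c - φf L x) (fun L x => -uf L x) := fun L hL =>
  ⟨(h L hL).1.reflect c, congrArg (2 * c - ·) (h L hL).2.1, congrArg (2 * c - ·) (h L hL).2.2⟩

/-- `σ(L) = √(2 (F r - F φ0))` at the turning value `r = r(L)`, and `timeMap φ0 r(L) = L`. As the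
time map is monotone, `r` increases with `L` and tends to `φs`. -/
lemma surfaceCharge_of_lt (hS : IsSaddleNonlinearity f F f' φs) (h0 : φ0 < φs)
    (h : SolvesEqualPotentialBVP f φ0 φf uf) :
    StrictMonoOn (fun L => |uf L (-(L / 2))|) (Ioi 0) ∧
      Tendsto (fun L => |uf L (-(L / 2))|) atTop (𝓝 √(2 * (F φs - F φ0))) := by
  have hturn : ∀ L ∈ Ioi (0 : ℝ), ∃ r ∈ Ico φ0 φs,
      timeMap f F f' φ0 r = L ∧ |uf L (-(L / 2))| = √(2 * (F r - F φ0)) := by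
    intro L hL
    obtain ⟨hsol, hleft, hright⟩ := h L hL
    have := hsol.exists_timeMap_eq hS (by linarith [mem_Ioi.1 hL]) (hright.trans hleft.symm)
      (hleft ▸ h0)
    rwa [hleft, sub_neg_eq_add, add_halves] at this
  choose! r hr using hturn
  have hFmono := potential_strictMonoOn_Iic hS.hasDerivAt_potential hS.strictAnti hS.apply_root
  have hg : StrictMonoOn (fun y => √(2 * (F y - F φ0))) (Icc φ0 φs) :=
    fun y₁ hy₁ y₂ hy₂ hlt => sqrt_lt_sqrt
      (by linarith [hFmono.monotoneOn (h0.le : φ0 ∈ Iic φs) hy₁.2 hy₁.1])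
      (by linarith [hFmono hy₁.2 hy₂.2 hlt])
  have hσ : EqOn (fun L => |uf L (-(L / 2))|) ((fun y => √(2 * (F y - F φ0))) ∘ r) (Ioi 0) :=
    fun L hL => (hr L hL).2.2
  refine ⟨hσ.symm.congr_strictMonoOn.1 <| hg.comp
    ((hS.monotoneOn_timeMap φ0).strictMonoOn_of_rightInvOn (fun L hL => (hr L hL).1)
      fun L hL => (hr L hL).2.1) fun L hL => Ico_subset_Icc_self (hr L hL).1, ?_⟩
  have hlim := (hS.monotoneOn_timeMap φ0).tendsto_of_eventually_rightInv (r := r)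
    (eventually_gt_atTop 0 |>.mono fun L hL => ⟨(hr L hL).1, (hr L hL).2.1⟩)
  refine (((continuous_sqrt.comp (continuous_const.mul
    (hS.continuous_potential.sub continuous_const))).tendsto φs).comp hlim).congr' ?_
  filter_upwards [eventually_gt_atTop 0] with L hL using (hσ hL).symm

lemma surfaceCharge_of_ne (hS : IsSaddleNonlinearity f F f' φs) (h0 : φ0 ≠ φs)
    (h : SolvesEqualPotentialBVP f φ0 φf uf) :
    StrictMonoOn (fun L => |uf L (-(L / 2))|) (Ioi 0) ∧
      Tendsto (fun L => |uf L (-(L / 2))|) atTop (𝓝 √(2 * (F φs - F φ0))) := by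
  rcases h0.lt_or_gt with h0 | h0
  · exact h.surfaceCharge_of_lt hS h0
  · simpa [two_mul] using (h.reflect φs).surfaceCharge_of_lt hS.reflect (by linarith)

lemma tendsto_surfaceCharge (hS : IsSaddleNonlinearity f F f' φs)
    (h : SolvesEqualPotentialBVP f φ0 φf uf) :
    Tendsto (fun L => |uf L (-(L / 2))|) atTop (𝓝 √(2 * (F φs - F φ0))) := by
  rcases eq_or_ne φ0 φs with rfl | h0
  · rw [sub_self, mul_zero, sqrt_zero]
    refine tendsto_const_nhds.congr' ?_
    filter_upwards [eventually_gt_atTop 0] with L hL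
    obtain ⟨hsol, hleft, hright⟩ := h L hL
    have hE := hsol.energy_le hS.hasDerivAt_potential hS.strictAnti hS.apply_root
      (by linarith) (hright.trans hleft.symm)
    rw [hleft] at hE
    rw [eq_comm, abs_eq_zero, ← sq_eq_zero_iff]
    nlinarith [sq_nonneg (uf L (-(L / 2)))]
  · exact (h.surfaceCharge_of_ne hS h0).2

end SolvesEqualPotentialBVP

lemma isSaddleNonlinearity_of_sum {N : ℕ} (hN : 1 ≤ N) {z c : Fin N → ℝ} (hz : ∀ j, z j ≠ 0)
    (hc : ∀ j, 0 < c j) {q0 : ℝ} {f F : ℝ → ℝ}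
    (hf : ∀ φ : ℝ, f φ = q0 + ∑ j, z j * c j * exp (-(z j) * φ))
    (hF : ∀ φ : ℝ, F φ = q0 * φ - ∑ j, c j * exp (-(z j) * φ)) {φs : ℝ} (hs : f φs = 0) :
    IsSaddleNonlinearity f F (fun φ => -∑ j, z j ^ 2 * c j * exp (-(z j) * φ)) φs where
  hasDerivAt_potential y := by
    rw [show F = fun t => q0 * t - ∑ j, c j * exp (-(z j) * t) from funext hF, hf]
    refine (((hasDerivAt_id' y).const_mul q0).sub (HasDerivAt.fun_sum fun j _ =>
      ((hasDerivAt_id' y).const_mul (-(z j))).exp.const_mul (c j))).congr_deriv ?_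
    rw [sub_eq_add_neg, ← Finset.sum_neg_distrib, mul_one]
    exact congrArg _ (Finset.sum_congr rfl fun j _ => by ring)
  hasDerivAt y := by
    rw [show f = fun t => q0 + ∑ j, z j * c j * exp (-(z j) * t) from funext hf]
    refine ((hasDerivAt_const y q0).add (HasDerivAt.fun_sum fun j _ =>
      ((hasDerivAt_id' y).const_mul (-(z j))).exp.const_mul (z j * c j))).congr_deriv ?_
    rw [zero_add, ← Finset.sum_neg_distrib]
    exact Finset.sum_congr rfl fun j _ => by ring
  deriv_neg y := by
    have : Nonempty (Fin N) := ⟨⟨0, hN⟩⟩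
    exact neg_neg_of_pos (Finset.sum_pos (fun j _ => by have := hz j; have := hc j; positivity)
      Finset.univ_nonempty)
  continuous_deriv := by fun_prop
  apply_root := hs

theorem stmt11_general {N : ℕ} (hN : 1 ≤ N) (z c : Fin N → ℝ)
    (hz : ∀ j, z j ≠ 0) (hc : ∀ j, 0 < c j) (q0 : ℝ)
    (f F : ℝ → ℝ)
    (hf : ∀ φ : ℝ, f φ = q0 + ∑ j, z j * c j * Real.exp (-(z j) * φ))
    (hF : ∀ φ : ℝ, F φ = q0 * φ - ∑ j, c j * Real.exp (-(z j) * φ))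
    (φstar : ℝ) (hstar : f φstar = 0)
    (φ0 : ℝ)
    (φf uf : ℝ → ℝ → ℝ)
    (hsol : ∀ L : ℝ, 0 < L →
      IsPBSol f (-(L / 2)) (L / 2) (φf L) (uf L) ∧
      φf L (-(L / 2)) = φ0 ∧ φf L (L / 2) = φ0)
    (σ : ℝ → ℝ) (hσ : ∀ L : ℝ, σ L = |uf L (-(L / 2))|) :
    (∀ L : ℝ, 0 < L → ∀ x ∈ Set.Icc (-(L / 2)) (L / 2), |uf L x| ≤ σ L) ∧
    (φ0 ≠ φstar → StrictMonoOn σ (Set.Ioi (0 : ℝ))) ∧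
    Tendsto σ atTop (𝓝 (Real.sqrt (2 * (F φstar - F φ0)))) := by
  have hS := isSaddleNonlinearity_of_sum hN hz hc hf hF hstar
  obtain rfl : σ = fun L => |uf L (-(L / 2))| := funext hσ
  refine ⟨fun L hL x hx => ?_,
    fun h0 => (SolvesEqualPotentialBVP.surfaceCharge_of_ne hS h0 hsol).1,
    SolvesEqualPotentialBVP.tendsto_surfaceCharge hS hsol⟩
  obtain ⟨hsolL, hleft, hright⟩ := hsol L hL
  exact hsolL.abs_field_le hS.hasDerivAt_potential hS.strictAnti hS.apply_root
    (hright.trans hleft.symm) x hx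

/-- Saturation of the surface charge density in the presence of an
equilibrium.  In the saddle case with unique zero `φ*` of `f`, let `φ_L` be the solution
of the equal-potential Dirichlet problem with value `φ0` on `[-L/2, L/2]` and
`σ(L) = |φ_L'(-L/2)|`.  Then `σ(L)` is the maximum of `|φ_L'|` over `[-L/2, L/2]`;
if `φ0 ≠ φ*` then `σ` is strictly increasing in `L`; and
`σ(L) → √(2 (F(φ*) − F(φ0)))` as `L → ∞`. -/
theorem stmt11 {N : ℕ} (hN : 1 ≤ N) (z c : Fin N → ℝ)
    (hz : ∀ j, z j ≠ 0) (hc : ∀ j, 0 < c j) (q0 : ℝ)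
    (f F : ℝ → ℝ)
    (hf : ∀ φ : ℝ, f φ = q0 + ∑ j, z j * c j * Real.exp (-(z j) * φ))
    (hF : ∀ φ : ℝ, F φ = q0 * φ - ∑ j, c j * Real.exp (-(z j) * φ))
    (hcase : (∃ i j, z i * z j < 0) ∨ (∀ j, z j * q0 < 0))
    (φstar : ℝ) (hstar : f φstar = 0)
    (φ0 : ℝ)
    (φf uf : ℝ → ℝ → ℝ)
    (hsol : ∀ L : ℝ, 0 < L →
      IsPBSol f (-(L / 2)) (L / 2) (φf L) (uf L) ∧
      φf L (-(L / 2)) = φ0 ∧ φf L (L / 2) = φ0)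
    (σ : ℝ → ℝ) (hσ : ∀ L : ℝ, σ L = |uf L (-(L / 2))|) :
    (∀ L : ℝ, 0 < L → ∀ x ∈ Set.Icc (-(L / 2)) (L / 2), |uf L x| ≤ σ L) ∧
    (φ0 ≠ φstar → StrictMonoOn σ (Set.Ioi (0 : ℝ))) ∧
    Tendsto σ atTop (𝓝 (Real.sqrt (2 * (F φstar - F φ0)))) :=
  stmt11_general hN z c hz hc q0 f F hf hF φstar hstar φ0 φf uf hsol σ hσ
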